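/- arXiv:2302.14613 — 5 statements merged into one kernel-verified Lean document; each statement's English description precedes it below -/
import Mathlib

section
/- Let n ≥ 2 and consider the vector field H = (ζ−ξ) Σ_j η_j ∂_{η_j} + ξ ρ ∂_ρ − 2|η|² ∂_ξ on (0,∞)_ρ × ℝ_ζ × ℝ_ξ × ℝ^{n−1}_η (with ζ constant along the flow). Fix an initial point (ρ₀, ζ, ξ, η) with ζ ≠ 0 satisfying the characteristic constraint −½ ξ(ξ−2ζ) + |η|² = 0. Then the curve Φ(s) = ( ρ₀ (1 + (ξ/(2ζ))(e^{2ζs} − 1)), ζ, 2ξζ / (ξ − (ξ−2ζ)e^{−2ζs}), 2ζ e^{−ζs} η / (ξ − (ξ−2ζ)e^{−2ζs}) ) satisfies Φ(0) = (ρ₀, ζ, ξ, η) and Φ'(s) = H(Φ(s)), for all s in the maximal interval on which the denominator ξ − (ξ−2ζ)e^{−2ζs} is positive; moreover Φ(s) satisfies the characteristic constraint for all such s. -/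
/-!
On the characteristic set the `ξ`-equation closes up into the logistic equation
`ξ' = ξ (2ζ − ξ)`, whose solution through `ξ` is `2ξζ / D` with
`D s = ξ − (ξ − 2ζ) e^{−2ζs}`. The `η`-component is a scalar multiple `c s • η` of the initial
value with `c' = (ζ − ξ(s)) c`, and `ρ(s) = ρ₀ D(s) e^{2ζs} / 2ζ`. All three follow from
`D s + (ξ − 2ζ) e^{−2ζs} = ξ`, which also shows that `ξ(s)(ξ(s) − 2ζ) / c(s)²` is conserved.
-/

open Real

namespace BicharacteristicFlow

noncomputable def flowDenom (ξ ζ s : ℝ) : ℝ := ξ - (ξ - 2 * ζ) * exp (-2 * ζ * s)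

variable {ξ ζ s : ℝ}

theorem hasDerivAt_flowDenom :
    HasDerivAt (flowDenom ξ ζ) (2 * ζ * (ξ - 2 * ζ) * exp (-2 * ζ * s)) s := by
  have hexp := (hasDerivAt_const_mul (-2 * ζ) (x := s)).exp
  refine ((hexp.const_mul (ξ - 2 * ζ)).const_sub ξ).congr_deriv ?_
  ring

theorem exp_neg_mul_sq : exp (-ζ * s) ^ 2 = exp (-2 * ζ * s) := by
  rw [← exp_nat_mul]
  congr 1
  push_cast
  ring

theorem flowDenom_add_mul_exp_sq : flowDenom ξ ζ s + (ξ - 2 * ζ) * exp (-ζ * s) ^ 2 = ξ := by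
  rw [exp_neg_mul_sq, flowDenom]
  ring

theorem one_add_mul_exp_sub_one_eq (hζ : ζ ≠ 0) :
    1 + ξ / (2 * ζ) * (exp (2 * ζ * s) - 1) = flowDenom ξ ζ s * exp (2 * ζ * s) / (2 * ζ) := by
  have hexp : exp (-2 * ζ * s) * exp (2 * ζ * s) = 1 := by
    rw [← exp_add, ← exp_zero]
    ring_nf
  rw [flowDenom]
  generalize exp (-2 * ζ * s) = a at hexp ⊢
  generalize exp (2 * ζ * s) = b at hexp ⊢
  field_simp
  linear_combination (ξ - 2 * ζ) * hexp

theorem hasDerivAt_rho (ρ₀ : ℝ) (hζ : ζ ≠ 0) (hD : flowDenom ξ ζ s ≠ 0) :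
    HasDerivAt (fun t => ρ₀ * (1 + ξ / (2 * ζ) * (exp (2 * ζ * t) - 1)))
      (2 * ξ * ζ / flowDenom ξ ζ s * (ρ₀ * (1 + ξ / (2 * ζ) * (exp (2 * ζ * s) - 1)))) s := by
  have hexp := (hasDerivAt_const_mul (2 * ζ) (x := s)).exp
  refine ((((hexp.sub_const 1).const_mul (ξ / (2 * ζ))).const_add 1).const_mul ρ₀).congr_deriv ?_
  rw [one_add_mul_exp_sub_one_eq hζ]
  field_simp

theorem hasDerivAt_logistic (hD : flowDenom ξ ζ s ≠ 0) :
    HasDerivAt (fun t => 2 * ξ * ζ / flowDenom ξ ζ t)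
      (2 * ξ * ζ / flowDenom ξ ζ s * (2 * ζ - 2 * ξ * ζ / flowDenom ξ ζ s)) s := by
  refine ((hasDerivAt_const s (2 * ξ * ζ)).div hasDerivAt_flowDenom hD).congr_deriv ?_
  have hsum := flowDenom_add_mul_exp_sq (ξ := ξ) (ζ := ζ) (s := s)
  rw [← exp_neg_mul_sq]
  generalize exp (-ζ * s) = e at hsum ⊢
  generalize flowDenom ξ ζ s = d at hD hsum ⊢
  field_simp
  linear_combination (-(4 * ξ * ζ ^ 2)) * hsum

theorem hasDerivAt_amplitude (hD : flowDenom ξ ζ s ≠ 0) :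
    HasDerivAt (fun t => 2 * ζ * exp (-ζ * t) / flowDenom ξ ζ t)
      ((ζ - 2 * ξ * ζ / flowDenom ξ ζ s) * (2 * ζ * exp (-ζ * s) / flowDenom ξ ζ s)) s := by
  have hexp := (hasDerivAt_const_mul (-ζ) (x := s)).exp
  refine ((hexp.const_mul (2 * ζ)).div hasDerivAt_flowDenom hD).congr_deriv ?_
  have hsum := flowDenom_add_mul_exp_sq (ξ := ξ) (ζ := ζ) (s := s)
  rw [← exp_neg_mul_sq]
  generalize exp (-ζ * s) = e at hsum ⊢
  generalize flowDenom ξ ζ s = d at hD hsum ⊢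
  field_simp
  linear_combination (-2 * ζ ^ 2 * e) * hsum

theorem logistic_mul_sub_eq_amplitude_sq_mul (hD : flowDenom ξ ζ s ≠ 0) :
    2 * ξ * ζ / flowDenom ξ ζ s * (2 * ξ * ζ / flowDenom ξ ζ s - 2 * ζ)
      = (2 * ζ * exp (-ζ * s) / flowDenom ξ ζ s) ^ 2 * (ξ * (ξ - 2 * ζ)) := by
  have hsum := flowDenom_add_mul_exp_sq (ξ := ξ) (ζ := ζ) (s := s)
  generalize exp (-ζ * s) = e at hsum ⊢
  generalize flowDenom ξ ζ s = d at hD hsum ⊢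
  field_simp
  linear_combination (-ξ * ζ ^ 2) * hsum

end BicharacteristicFlow

open BicharacteristicFlow in
theorem bicharacteristic_flow_near_I0_general
    (n : ℕ)
    (ρ₀ ξ ζ : ℝ) (η : EuclideanSpace ℝ (Fin (n - 1)))
    (hζ : ζ ≠ 0)
    (hchar : -(1 / 2) * ξ * (ξ - 2 * ζ) + ‖η‖ ^ 2 = 0) :
    let D : ℝ → ℝ := fun s => ξ - (ξ - 2 * ζ) * Real.exp (-2 * ζ * s)
    let Φρ : ℝ → ℝ := fun s => ρ₀ * (1 + ξ / (2 * ζ) * (Real.exp (2 * ζ * s) - 1))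
    let Φξ : ℝ → ℝ := fun s => 2 * ξ * ζ / D s
    let Φη : ℝ → EuclideanSpace ℝ (Fin (n - 1)) :=
      fun s => (2 * ζ * Real.exp (-ζ * s) / D s) • η;
    (Φρ 0 = ρ₀ ∧ Φξ 0 = ξ ∧ Φη 0 = η)
    ∧ (∀ s : ℝ, 0 < D s →
        HasDerivAt Φρ (Φξ s * Φρ s) s
        ∧ HasDerivAt Φξ (-2 * ‖Φη s‖ ^ 2) s
        ∧ HasDerivAt Φη ((ζ - Φξ s) • Φη s) s)
    ∧ (∀ s : ℝ, 0 < D s → -(1 / 2) * Φξ s * (Φξ s - 2 * ζ) + ‖Φη s‖ ^ 2 = 0) := by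
  intro D Φρ Φξ Φη
  have hnorm_sq (s : ℝ) :
      ‖Φη s‖ ^ 2 = (2 * ζ * exp (-ζ * s) / flowDenom ξ ζ s) ^ 2 * (ξ * (ξ - 2 * ζ) / 2) := by
    show ‖(2 * ζ * exp (-ζ * s) / flowDenom ξ ζ s) • η‖ ^ 2 = _
    rw [norm_smul, mul_pow, Real.norm_eq_abs, sq_abs]
    linear_combination (2 * ζ * exp (-ζ * s) / flowDenom ξ ζ s) ^ 2 * hchar
  have hconserved (s : ℝ) (hD : 0 < D s) : Φξ s * (Φξ s - 2 * ζ)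
      = (2 * ζ * exp (-ζ * s) / flowDenom ξ ζ s) ^ 2 * (ξ * (ξ - 2 * ζ)) :=
    logistic_mul_sub_eq_amplitude_sq_mul hD.ne'
  refine ⟨⟨by simp [Φρ], ?_, ?_⟩, fun s hD => ⟨?_, ?_, ?_⟩, fun s hD => ?_⟩
  · simp only [Φξ, D, mul_zero, exp_zero, mul_one, sub_sub_cancel]
    field_simp
  · simp only [Φη, D, mul_zero, exp_zero, mul_one, sub_sub_cancel,
      div_self (mul_ne_zero two_ne_zero hζ), one_smul]
  · exact hasDerivAt_rho ρ₀ hζ hD.ne'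
  · have hlogistic : HasDerivAt Φξ (Φξ s * (2 * ζ - Φξ s)) s := hasDerivAt_logistic hD.ne'
    refine hlogistic.congr_deriv ?_
    rw [hnorm_sq]
    linear_combination (-1 : ℝ) * hconserved s hD
  · show HasDerivAt Φη ((ζ - Φξ s) • (2 * ζ * exp (-ζ * s) / D s) • η) s
    rw [smul_smul]
    exact (hasDerivAt_amplitude hD.ne').smul_const η
  · rw [hnorm_sq]
    linear_combination (-(1 / 2) : ℝ) * hconserved s hD

/-- Explicit integration of the model Hamiltonian flow
`H = (ζ−ξ) η∂_η + ξρ∂_ρ − 2|η|²∂_ξ` (with `ζ` constant) through a characteristic point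
with `ζ ≠ 0`: the curve `Φ` given below solves the flow, has the correct initial value,
and preserves the characteristic constraint `−½ξ(ξ−2ζ) + |η|² = 0`, on the set where the
denominator `D s = ξ − (ξ−2ζ)e^{−2ζs}` is positive. -/
theorem bicharacteristic_flow_near_I0
    (n : ℕ) (hn : 2 ≤ n)
    (ρ₀ ξ ζ : ℝ) (η : EuclideanSpace ℝ (Fin (n - 1)))
    (hρ : 0 < ρ₀) (hζ : ζ ≠ 0)
    (hchar : -(1 / 2) * ξ * (ξ - 2 * ζ) + ‖η‖ ^ 2 = 0) :
    let D : ℝ → ℝ := fun s => ξ - (ξ - 2 * ζ) * Real.exp (-2 * ζ * s)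
    let Φρ : ℝ → ℝ := fun s => ρ₀ * (1 + ξ / (2 * ζ) * (Real.exp (2 * ζ * s) - 1))
    let Φξ : ℝ → ℝ := fun s => 2 * ξ * ζ / D s
    let Φη : ℝ → EuclideanSpace ℝ (Fin (n - 1)) :=
      fun s => (2 * ζ * Real.exp (-ζ * s) / D s) • η;
    (Φρ 0 = ρ₀ ∧ Φξ 0 = ξ ∧ Φη 0 = η)
    ∧ (∀ s : ℝ, 0 < D s →
        HasDerivAt Φρ (Φξ s * Φρ s) s
        ∧ HasDerivAt Φξ (-2 * ‖Φη s‖ ^ 2) s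
        ∧ HasDerivAt Φη ((ζ - Φξ s) • Φη s) s)
    ∧ (∀ s : ℝ, 0 < D s → -(1 / 2) * Φξ s * (Φξ s - 2 * ζ) + ‖Φη s‖ ^ 2 = 0) :=
  bicharacteristic_flow_near_I0_general n ρ₀ ξ ζ η hζ hchar
end

section
/- Let n ≥ 2 and consider the vector field H⁺ = (ξ−ζ) Σ_j η_j ∂_{η_j} − ξ ρ ∂_ρ − 2|η|² ∂_ξ on (0,∞)_ρ × ℝ_ζ × ℝ_ξ × ℝ^{n−1}_η. Fix an initial point (ρ₊, ζ, ξ, η) with ζ > 0, 0 ≤ ξ ≤ 2ζ, and ½ξ(ξ−2ζ) + |η|² = 0. Then the curve Φ(s) = ( ρ₊ (1 + (ξ/(2ζ))(e^{−2ζs} − 1)), ζ, 2ξζ / (ξ + (2ζ−ξ)e^{2ζs}), 2ζ e^{ζs} η / (ξ + (2ζ−ξ)e^{2ζs}) ) satisfies Φ(0) = (ρ₊,ζ,ξ,η), Φ'(s) = H⁺(Φ(s)) for all s ≥ 0, and preserves the constraint. Moreover: (a) if ξ = 2ζ (hence η = 0), then Φ(s) = (ρ₊ e^{−2ζs}, ζ,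 2ζ, 0), whose first component tends to 0 as s → ∞; (b) if 0 ≤ ξ < 2ζ, then Φ(s) → (ρ₊(1 − ξ/(2ζ)), ζ, 0, 0) as s → ∞. -/
/-!
On the characteristic set `ξ' = -2|η|²` becomes the Riccati equation `ξ' = ξ(ξ - 2ζ)`, solved by
`2ξζ / D` with `D s = ξ + (2ζ - ξ) e^{2ζs}`, since `2ξζ / D = 2ζ - D' / D`. The remaining
equations are then linear: `2ζ e^{ζs} / D` solves `c' = (Φξ - ζ) c` and `ρ₊ e^{-2ζs} D / (2ζ)`
(the given `Φρ`) solves `ρ' = -Φξ ρ`. The constraint is preserved because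
`Φξ (Φξ - 2ζ) = ξ (ξ - 2ζ) c²`. When `ξ < 2ζ`, `D` grows like `e^{2ζs}`, which drives `Φξ` and
`Φη` to `0` and leaves `Φρ → ρ₊ (1 - ξ / (2ζ))`.
-/

open Filter Topology Real

noncomputable def bicharDenom (ξ ζ s : ℝ) : ℝ := ξ + (2 * ζ - ξ) * exp (2 * ζ * s)

section

variable {ξ ζ : ℝ}

lemma exp_two_mul_eq_sq (ζ s : ℝ) : exp (2 * ζ * s) = exp (ζ * s) ^ 2 := by
  rw [← exp_nat_mul]; ring_nf

lemma hasDerivAt_exp_mul (c s : ℝ) : HasDerivAt (fun t => exp (c * t)) (exp (c * s) * c) s := by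
  simpa using ((hasDerivAt_id' s).const_mul c).exp

lemma bicharDenom_pos (hζ : 0 < ζ) (hξ0 : 0 ≤ ξ) (hξ2 : ξ ≤ 2 * ζ) (s : ℝ) :
    0 < bicharDenom ξ ζ s := by
  rcases hξ2.lt_or_eq with hlt | rfl
  · exact add_pos_of_nonneg_of_pos hξ0 (mul_pos (by linarith) (exp_pos _))
  · simpa [bicharDenom] using hζ

lemma hasDerivAt_bicharDenom (s : ℝ) :
    HasDerivAt (bicharDenom ξ ζ) ((2 * ζ - ξ) * (exp (2 * ζ * s) * (2 * ζ))) s :=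
  ((hasDerivAt_exp_mul _ s).const_mul (2 * ζ - ξ)).const_add ξ

lemma bicharXi_zero (hζ : ζ ≠ 0) : 2 * ξ * ζ / bicharDenom ξ ζ 0 = ξ := by
  simp only [bicharDenom, mul_zero, exp_zero]
  field_simp
  ring

lemma bicharEta_coeff_zero (hζ : ζ ≠ 0) : 2 * ζ * exp (ζ * 0) / bicharDenom ξ ζ 0 = 1 := by
  simp only [bicharDenom, mul_zero, exp_zero]
  field_simp
  ring

lemma bicharRho_of_eq (ρ : ℝ) (hζ : ζ ≠ 0) (s : ℝ) :
    ρ * (1 + 2 * ζ / (2 * ζ) * (exp (-2 * ζ * s) - 1)) = ρ * exp (-2 * ζ * s) := by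
  rw [div_self (mul_ne_zero two_ne_zero hζ)]
  ring

lemma bicharXi_of_eq (hζ : ζ ≠ 0) (s : ℝ) : 2 * (2 * ζ) * ζ / bicharDenom (2 * ζ) ζ s = 2 * ζ := by
  simp only [bicharDenom, sub_self, zero_mul, add_zero]
  field_simp

lemma hasDerivAt_riccati {s : ℝ} (hD : bicharDenom ξ ζ s ≠ 0) :
    HasDerivAt (fun t => 2 * ξ * ζ / bicharDenom ξ ζ t)
      (2 * ξ * ζ / bicharDenom ξ ζ s * (2 * ξ * ζ / bicharDenom ξ ζ s - 2 * ζ)) s := by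
  refine ((hasDerivAt_const s _).div (hasDerivAt_bicharDenom s) hD).congr_deriv ?_
  field_simp
  simp only [bicharDenom]
  ring

lemma hasDerivAt_bicharEta {E : Type*} [NormedAddCommGroup E] [NormedSpace ℝ E] (v : E) {s : ℝ}
    (hD : bicharDenom ξ ζ s ≠ 0) :
    HasDerivAt (fun t => (2 * ζ * exp (ζ * t) / bicharDenom ξ ζ t) • v)
      ((2 * ξ * ζ / bicharDenom ξ ζ s - ζ) • (2 * ζ * exp (ζ * s) / bicharDenom ξ ζ s) • v) s := by
  have hc := ((hasDerivAt_exp_mul ζ s).const_mul (2 * ζ)).div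
    (hasDerivAt_bicharDenom s) hD
  refine (hc.smul_const v).congr_deriv ?_
  rw [smul_smul]
  congr 1
  field_simp
  simp only [bicharDenom, exp_two_mul_eq_sq]
  ring

lemma hasDerivAt_bicharRho (ρ : ℝ) (hζ : ζ ≠ 0) {s : ℝ} (hD : bicharDenom ξ ζ s ≠ 0) :
    HasDerivAt (fun t => ρ * (1 + ξ / (2 * ζ) * (exp (-2 * ζ * t) - 1)))
      (-(2 * ξ * ζ / bicharDenom ξ ζ s) * (ρ * (1 + ξ / (2 * ζ) * (exp (-2 * ζ * s) - 1)))) s := by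
  have h := (((hasDerivAt_exp_mul (-2 * ζ) s).sub_const 1).const_mul
    (ξ / (2 * ζ))).const_add 1 |>.const_mul ρ
  refine h.congr_deriv ?_
  have hneg : exp (-2 * ζ * s) = (exp (2 * ζ * s))⁻¹ := by rw [← exp_neg]; ring_nf
  rw [hneg]
  field_simp
  simp only [bicharDenom]
  ring

lemma bichar_constraint_preserved {E : Type*} [NormedAddCommGroup E] [NormedSpace ℝ E] {v : E}
    (hchar : (1 / 2) * ξ * (ξ - 2 * ζ) + ‖v‖ ^ 2 = 0) {s : ℝ} (hD : bicharDenom ξ ζ s ≠ 0) :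
    (1 / 2) * (2 * ξ * ζ / bicharDenom ξ ζ s) * (2 * ξ * ζ / bicharDenom ξ ζ s - 2 * ζ)
      + ‖(2 * ζ * exp (ζ * s) / bicharDenom ξ ζ s) • v‖ ^ 2 = 0 := by
  have hconserved : 2 * ξ * ζ / bicharDenom ξ ζ s * (2 * ξ * ζ / bicharDenom ξ ζ s - 2 * ζ)
      = ξ * (ξ - 2 * ζ) * (2 * ζ * exp (ζ * s) / bicharDenom ξ ζ s) ^ 2 := by
    field_simp
    simp only [bicharDenom, exp_two_mul_eq_sq]
    ring
  rw [norm_smul, mul_pow, Real.norm_eq_abs, sq_abs]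
  linear_combination (1 / 2 : ℝ) * hconserved
    + (2 * ζ * exp (ζ * s) / bicharDenom ξ ζ s) ^ 2 * hchar

lemma hasDerivAt_bicharXi {E : Type*} [NormedAddCommGroup E] [NormedSpace ℝ E] {v : E}
    (hchar : (1 / 2) * ξ * (ξ - 2 * ζ) + ‖v‖ ^ 2 = 0) {s : ℝ} (hD : bicharDenom ξ ζ s ≠ 0) :
    HasDerivAt (fun t => 2 * ξ * ζ / bicharDenom ξ ζ t)
      (-2 * ‖(2 * ζ * exp (ζ * s) / bicharDenom ξ ζ s) • v‖ ^ 2) s :=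
  (hasDerivAt_riccati hD).congr_deriv (by linarith [bichar_constraint_preserved hchar hD])

lemma tendsto_exp_mul_atTop_of_neg {c : ℝ} (hc : c < 0) :
    Tendsto (fun s => exp (c * s)) atTop (𝓝 0) :=
  tendsto_exp_comp_nhds_zero.2 (tendsto_id.const_mul_atTop_of_neg hc)

lemma tendsto_bicharRho (ρ : ℝ) (hζ : 0 < ζ) :
    Tendsto (fun s => ρ * (1 + ξ / (2 * ζ) * (exp (-2 * ζ * s) - 1))) atTop
      (𝓝 (ρ * (1 - ξ / (2 * ζ)))) := by
  have hlim := (((tendsto_exp_mul_atTop_of_neg (c := -2 * ζ) (by linarith)).sub_const 1).const_mul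
    (ξ / (2 * ζ))).const_add 1 |>.const_mul ρ
  convert hlim using 2
  ring

lemma tendsto_bicharDenom_atTop (hζ : 0 < ζ) (hξ : ξ < 2 * ζ) :
    Tendsto (bicharDenom ξ ζ) atTop atTop :=
  tendsto_atTop_add_const_left _ ξ <| Tendsto.const_mul_atTop (by linarith) <|
    tendsto_exp_atTop.comp (tendsto_id.const_mul_atTop (by linarith))

lemma tendsto_bicharEta_coeff (hζ : 0 < ζ) (hξ : ξ < 2 * ζ) :
    Tendsto (fun s => 2 * ζ * exp (ζ * s) / bicharDenom ξ ζ s) atTop (𝓝 0) := by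
  have hsplit (s : ℝ) :
      bicharDenom ξ ζ s / exp (ζ * s) = ξ * exp (-ζ * s) + (2 * ζ - ξ) * exp (ζ * s) := by
    rw [bicharDenom, exp_two_mul_eq_sq, neg_mul, exp_neg]
    field_simp
  have hgrow : Tendsto (fun s => bicharDenom ξ ζ s / exp (ζ * s)) atTop atTop := by
    simp only [hsplit]
    refine Tendsto.add_atTop (C := 0) ?_ ?_
    · simpa using (tendsto_exp_mul_atTop_of_neg (neg_neg_of_pos hζ)).const_mul ξ
    · exact Tendsto.const_mul_atTop (by linarith)
        (tendsto_exp_atTop.comp (tendsto_id.const_mul_atTop hζ))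
  simpa only [div_div_eq_mul_div] using tendsto_const_nhds.div_atTop hgrow

end

theorem bicharacteristic_flow_near_Iplus_general
    (n : ℕ)
    (ρp ξ ζ : ℝ) (η : EuclideanSpace ℝ (Fin (n - 1)))
    (hζ : 0 < ζ) (hξ0 : 0 ≤ ξ) (hξ2 : ξ ≤ 2 * ζ)
    (hchar : (1 / 2) * ξ * (ξ - 2 * ζ) + ‖η‖ ^ 2 = 0) :
    let D : ℝ → ℝ := fun s => ξ + (2 * ζ - ξ) * Real.exp (2 * ζ * s)
    let Φρ : ℝ → ℝ := fun s => ρp * (1 + ξ / (2 * ζ) * (Real.exp (-2 * ζ * s) - 1))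
    let Φξ : ℝ → ℝ := fun s => 2 * ξ * ζ / D s
    let Φη : ℝ → EuclideanSpace ℝ (Fin (n - 1)) :=
      fun s => (2 * ζ * Real.exp (ζ * s) / D s) • η;
    (Φρ 0 = ρp ∧ Φξ 0 = ξ ∧ Φη 0 = η)
    ∧ (∀ s : ℝ, 0 ≤ s →
        HasDerivAt Φρ (-(Φξ s) * Φρ s) s
        ∧ HasDerivAt Φξ (-2 * ‖Φη s‖ ^ 2) s
        ∧ HasDerivAt Φη ((Φξ s - ζ) • Φη s) s
        ∧ (1 / 2) * Φξ s * (Φξ s - 2 * ζ) + ‖Φη s‖ ^ 2 = 0)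
    ∧ (ξ = 2 * ζ →
        η = 0
        ∧ (∀ s : ℝ, Φρ s = ρp * Real.exp (-2 * ζ * s) ∧ Φξ s = 2 * ζ ∧ Φη s = 0)
        ∧ Tendsto Φρ atTop (𝓝 0))
    ∧ (ξ < 2 * ζ →
        Tendsto Φρ atTop (𝓝 (ρp * (1 - ξ / (2 * ζ))))
        ∧ Tendsto Φξ atTop (𝓝 0)
        ∧ Tendsto Φη atTop (𝓝 0)) := by
  intro D Φρ Φξ Φη
  have hD (s : ℝ) : bicharDenom ξ ζ s ≠ 0 := (bicharDenom_pos hζ hξ0 hξ2 s).ne'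
  refine ⟨⟨by simp [Φρ], bicharXi_zero hζ.ne', ?_⟩,
    fun s _ => ⟨hasDerivAt_bicharRho ρp hζ.ne' (hD s), hasDerivAt_bicharXi hchar (hD s),
      hasDerivAt_bicharEta η (hD s), bichar_constraint_preserved hchar (hD s)⟩,
    fun hξ => ?_,
    fun hξ => ⟨tendsto_bicharRho ρp hζ,
      tendsto_const_nhds.div_atTop (tendsto_bicharDenom_atTop hζ hξ), ?_⟩⟩
  · show (2 * ζ * exp (ζ * 0) / bicharDenom ξ ζ 0) • η = η
    rw [bicharEta_coeff_zero hζ.ne', one_smul]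
  · subst hξ
    have hη0 : η = 0 := by
      rw [← norm_eq_zero, ← sq_eq_zero_iff]
      linarith
    refine ⟨hη0, fun s => ⟨bicharRho_of_eq ρp hζ.ne' s, bicharXi_of_eq hζ.ne' s, ?_⟩, ?_⟩
    · show _ • η = 0
      rw [hη0, smul_zero]
    · convert tendsto_bicharRho (ξ := 2 * ζ) ρp hζ using 2
      field_simp
      ring
  · have hlim := (tendsto_bicharEta_coeff hζ hξ).smul_const η
    rwa [zero_smul] at hlim

/-- Explicit integration of `H⁺ = (ξ−ζ)η∂_η − ξρ∂_ρ − 2|η|²∂_ξ` through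
a point with `ζ > 0`, `0 ≤ ξ ≤ 2ζ` on the characteristic set `½ξ(ξ−2ζ) + |η|² = 0`: the
curve `Φ` below solves the flow for `s ≥ 0`, preserves the constraint, and moreover:
(a) if `ξ = 2ζ` then `η = 0` and `Φ(s) = (ρ₊ e^{−2ζs}, ζ, 2ζ, 0)` with first component
tending to `0`; (b) if `ξ < 2ζ` then `Φ(s) → (ρ₊(1 − ξ/(2ζ)), ζ, 0, 0)` as `s → ∞`. -/
theorem bicharacteristic_flow_near_Iplus
    (n : ℕ) (hn : 2 ≤ n)
    (ρp ξ ζ : ℝ) (η : EuclideanSpace ℝ (Fin (n - 1)))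
    (hρ : 0 < ρp) (hζ : 0 < ζ) (hξ0 : 0 ≤ ξ) (hξ2 : ξ ≤ 2 * ζ)
    (hchar : (1 / 2) * ξ * (ξ - 2 * ζ) + ‖η‖ ^ 2 = 0) :
    let D : ℝ → ℝ := fun s => ξ + (2 * ζ - ξ) * Real.exp (2 * ζ * s)
    let Φρ : ℝ → ℝ := fun s => ρp * (1 + ξ / (2 * ζ) * (Real.exp (-2 * ζ * s) - 1))
    let Φξ : ℝ → ℝ := fun s => 2 * ξ * ζ / D s
    let Φη : ℝ → EuclideanSpace ℝ (Fin (n - 1)) :=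
      fun s => (2 * ζ * Real.exp (ζ * s) / D s) • η;
    (Φρ 0 = ρp ∧ Φξ 0 = ξ ∧ Φη 0 = η)
    ∧ (∀ s : ℝ, 0 ≤ s →
        HasDerivAt Φρ (-(Φξ s) * Φρ s) s
        ∧ HasDerivAt Φξ (-2 * ‖Φη s‖ ^ 2) s
        ∧ HasDerivAt Φη ((Φξ s - ζ) • Φη s) s
        ∧ (1 / 2) * Φξ s * (Φξ s - 2 * ζ) + ‖Φη s‖ ^ 2 = 0)
    ∧ (ξ = 2 * ζ →
        η = 0
        ∧ (∀ s : ℝ, Φρ s = ρp * Real.exp (-2 * ζ * s) ∧ Φξ s = 2 * ζ ∧ Φη s = 0)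
        ∧ Tendsto Φρ atTop (𝓝 0))
    ∧ (ξ < 2 * ζ →
        Tendsto Φρ atTop (𝓝 (ρp * (1 - ξ / (2 * ζ))))
        ∧ Tendsto Φξ atTop (𝓝 0)
        ∧ Tendsto Φη atTop (𝓝 0)) :=
  bicharacteristic_flow_near_Iplus_general n ρp ξ ζ η hζ hξ0 hξ2 hchar
end

section
/- Let Q = [0,∞)_x × ℝ^p_y × ℝ_z, and let 𝒱_eb denote the C^∞(Q)-module of vector fields spanned by x∂_x, x∂_{y_1}, …, x∂_{y_p}, ∂_z. Let V = a·x∂_x + Σ_j b_j ∂_{y_j} + c·∂_z with a, b_j, c ∈ C^∞(Q). Then [V, W] ∈ 𝒱_eb for every W ∈ 𝒱_eb if and only if ∂_z b_j(0, y, z) = 0 for all j = 1,…,p and all (y,z), i.e. each restriction b_j|_{x=0} is independent of z. -/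
/-- Points of (a smooth extension across the boundary of) `Q = [0,∞)_x × ℝ^p_y × ℝ_z`. -/
abbrev EbSpace (p : ℕ) : Type := ℝ × (Fin p → ℝ) × ℝ

/-- The commutator (Lie bracket) of two vector fields, written in coordinates. -/
noncomputable def vfBracket (p : ℕ) (X Y : EbSpace p → EbSpace p) : EbSpace p → EbSpace p :=
  fun q => fderiv ℝ Y q (X q) - fderiv ℝ X q (Y q)

/-- The `C^∞(Q)`-module `𝒱_eb` of edge-b-vector fields: those of the form
`A·(x∂_x) + Σ_j B_j·(x∂_{y_j}) + C·∂_z` with smooth coefficients. -/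
def IsEbVF (p : ℕ) (W : EbSpace p → EbSpace p) : Prop :=
  ∃ (A : EbSpace p → ℝ) (B : EbSpace p → Fin p → ℝ) (C : EbSpace p → ℝ),
    ContDiff ℝ (⊤ : ℕ∞) A ∧ ContDiff ℝ (⊤ : ℕ∞) B ∧ ContDiff ℝ (⊤ : ℕ∞) C ∧
    ∀ q, W q = (q.1 * A q, q.1 • B q, C q)

/-! By Hadamard's lemma (`f(x, e) = x · ∫₀¹ ∂ₓf(t x, e) dt` when `f(0, ·) = 0`), a smooth vector
field lies in `𝒱_eb` exactly when its `∂_x`- and `∂_y`-components vanish on `{x = 0}`. The bracket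
of smooth fields is smooth, and at a boundary point `V` is tangent to `{x = 0}` while `W = C ∂_z`,
so every term of the `∂_x`- and `∂_y`-components of `[V, W]` there is a tangential derivative of a
function vanishing on `{x = 0}`, except `-C ∂_z b`. Testing with `W = ∂_z` gives the converse. -/

universe u

open intervalIntegral

section ParametricIntegral

variable {E : Type u} [NormedAddCommGroup E] [NormedSpace ℝ E] [FiniteDimensional ℝ E]

theorem hasFDerivAt_intervalIntegral_of_contDiff {F : Type*} [NormedAddCommGroup F]
    [NormedSpace ℝ F] [CompleteSpace F] {h : E × ℝ → F} (hh : ContDiff ℝ 1 h) (a b : ℝ)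
    (x₀ : E) :
    HasFDerivAt (fun x => ∫ t in a..b, h (x, t))
      (∫ t in a..b, fderiv ℝ h (x₀, t) ∘L .inl ℝ E ℝ) x₀ := by
  have hD : Continuous fun q : E × ℝ => fderiv ℝ h q ∘L .inl ℝ E ℝ :=
    (hh.continuous_fderiv one_ne_zero).clm_comp continuous_const
  obtain ⟨C, hC⟩ := ((isCompact_closedBall x₀ 1).prod (isCompact_uIcc (a := a) (b := b))
    ).exists_bound_of_continuousOn hD.continuousOn
  refine hasFDerivAt_integral_of_dominated_of_fderiv_le (F := fun x t => h (x, t))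
    (F' := fun x t => fderiv ℝ h (x, t) ∘L .inl ℝ E ℝ) (bound := fun _ => C)
    (Metric.ball_mem_nhds x₀ one_pos) ?_ ?_ ?_ ?_ intervalIntegrable_const ?_
  · exact .of_forall fun x => (hh.continuous.comp (.prodMk_right x)).aestronglyMeasurable
  · exact (hh.continuous.comp (.prodMk_right x₀)).intervalIntegrable a b
  · exact (hD.comp (.prodMk_right x₀)).aestronglyMeasurable
  · exact .of_forall fun t ht x hx =>
      hC _ ⟨Metric.ball_subset_closedBall hx, Set.uIoc_subset_uIcc ht⟩
  · exact .of_forall fun t _ x _ =>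
      ((hh.differentiable one_ne_zero) (x, t)).hasFDerivAt.comp x
        ((hasFDerivAt_id x).prodMk (hasFDerivAt_const t x))

-- `F` lives in the universe of `E` because the induction passes from `F` to `E →L[ℝ] F`.
theorem contDiff_intervalIntegral_of_contDiff {n : ℕ∞} {F : Type u} [NormedAddCommGroup F]
    [NormedSpace ℝ F] [CompleteSpace F] {h : E × ℝ → F} (hh : ContDiff ℝ n h) (a b : ℝ) :
    ContDiff ℝ n fun x => ∫ t in a..b, h (x, t) := by
  suffices ∀ m : ℕ, ∀ {F : Type u} [NormedAddCommGroup F] [NormedSpace ℝ F] [CompleteSpace F]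
      (h : E × ℝ → F), ContDiff ℝ m h → ContDiff ℝ m fun x => ∫ t in a..b, h (x, t) from
    contDiff_iff_forall_nat_le.2 fun m hm => this m h (hh.of_le (by exact_mod_cast hm))
  intro m
  induction m with
  | zero =>
    intro F _ _ _ h hh
    exact contDiff_zero.2 (continuous_parametric_intervalIntegral_of_continuous'
      (f := fun x t => h (x, t)) (contDiff_zero.1 hh) a b)
  | succ m ih =>
    intro F _ _ _ h hh
    have hder x := hasFDerivAt_intervalIntegral_of_contDiff (hh.of_le (by simp)) a b x
    push_cast
    rw [contDiff_succ_iff_fderiv, funext fun x => (hder x).fderiv]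
    exact ⟨fun x => (hder x).differentiableAt, by simp,
      ih _ ((hh.fderiv_right le_rfl).clm_comp contDiff_const)⟩

end ParametricIntegral

theorem exists_contDiff_eq_fst_smul {E F : Type u} [NormedAddCommGroup E] [NormedSpace ℝ E]
    [FiniteDimensional ℝ E] [NormedAddCommGroup F] [NormedSpace ℝ F] [CompleteSpace F]
    {n : ℕ∞} {f : ℝ × E → F} (hf : ContDiff ℝ (n + 1) f)
    (hf0 : ∀ e, f (0, e) = 0) : ∃ g : ℝ × E → F, ContDiff ℝ n g ∧ ∀ q, f q = q.1 • g q := by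
  refine ⟨fun q => ∫ t in (0 : ℝ)..1, fderiv ℝ f (t * q.1, q.2) (1, 0), ?_, ?_⟩
  · exact contDiff_intervalIntegral_of_contDiff
      (((hf.fderiv_right le_rfl).comp (f := fun p : (ℝ × E) × ℝ => (p.2 * p.1.1, p.1.2))
        (by fun_prop)).clm_apply contDiff_const) 0 1
  · rintro ⟨x, e⟩
    have hftc := map_add_eq_sum_add_integral_iteratedFDeriv (n := 0) (x := ((0 : ℝ), e))
      (y := (x, (0 : E))) fun t _ => (hf.of_le (by simp)).contDiffAt
    simp only [Prod.mk_add_mk, zero_add, add_zero, Finset.range_one, Finset.sum_singleton,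
      Nat.factorial_zero, Nat.cast_one, inv_one, iteratedFDeriv_zero_apply, one_smul, pow_zero,
      Nat.reduceAdd, Prod.smul_mk, smul_eq_mul, smul_zero, iteratedFDeriv_one_apply] at hftc
    have hx : ((x, 0) : ℝ × E) = x • ((1 : ℝ), (0 : E)) := by simp
    simp only [hftc, hf0, zero_add, hx, map_smul, integral_smul]

theorem map_fderiv_apply_zero_mk_eq_zero {𝕜 E₁ E F G : Type*} [NontriviallyNormedField 𝕜]
    [NormedAddCommGroup E₁] [NormedSpace 𝕜 E₁] [NormedAddCommGroup E] [NormedSpace 𝕜 E]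
    [NormedAddCommGroup F] [NormedSpace 𝕜 F] [NormedAddCommGroup G] [NormedSpace 𝕜 G]
    {f : E₁ × E → F} (L : F →L[𝕜] G) {x₀ : E₁} (hf : ∀ e, L (f (x₀, e)) = 0) {e : E}
    (hd : DifferentiableAt 𝕜 f (x₀, e)) (w : E) : L (fderiv 𝕜 f (x₀, e) (0, w)) = 0 := by
  have hslice := L.hasFDerivAt.comp e (hd.hasFDerivAt.comp e (hasFDerivAt_prodMk_right x₀ e))
  have hzero : HasFDerivAt (fun e => L (f (x₀, e))) (0 : E →L[𝕜] G) e := by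
    simpa only [hf] using hasFDerivAt_const (0 : G) e
  simpa using congrArg (· w) (hslice.unique hzero)

theorem isEbVF_iff {p : ℕ} {W : EbSpace p → EbSpace p} :
    IsEbVF p W ↔ ContDiff ℝ (⊤ : ℕ∞) W ∧ ∀ e, (W (0, e)).1 = 0 ∧ (W (0, e)).2.1 = 0 := by
  constructor
  · rintro ⟨A, B, C, hA, hB, hC, hW⟩
    rw [funext hW]
    exact ⟨(contDiff_fst.mul hA).prodMk ((contDiff_fst.smul hB).prodMk hC), fun e => by simp⟩
  · rintro ⟨hW, hW0⟩
    obtain ⟨A, hA, hxA⟩ := exists_contDiff_eq_fst_smul (n := ⊤) (f := fun q => (W q).1)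
      (by simpa using hW.fst) fun e => (hW0 e).1
    obtain ⟨B, hB, hxB⟩ := exists_contDiff_eq_fst_smul (n := ⊤) (f := fun q => (W q).2.1)
      (by simpa using hW.snd.fst) fun e => (hW0 e).2
    exact ⟨A, B, fun q => (W q).2.2, hA, hB, hW.snd.snd,
      fun q => by ext <;> simp [hxA, hxB]⟩

theorem contDiff_vfBracket {p : ℕ} {n : ℕ∞} {X Y : EbSpace p → EbSpace p}
    (hX : ContDiff ℝ (n + 1) X) (hY : ContDiff ℝ (n + 1) Y) : ContDiff ℝ n (vfBracket p X Y) :=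
  ((hY.fderiv_right le_rfl).clm_apply (hX.of_le (by simp))).sub
    ((hX.fderiv_right le_rfl).clm_apply (hY.of_le (by simp)))

theorem vfBracket_apply_zero_mk {p : ℕ} {V W : EbSpace p → EbSpace p} {e : (Fin p → ℝ) × ℝ}
    (hV : DifferentiableAt ℝ V (0, e)) (hW : DifferentiableAt ℝ W (0, e))
    (hV0 : ∀ e, (V (0, e)).1 = 0) (hW0 : ∀ e, (W (0, e)).1 = 0 ∧ (W (0, e)).2.1 = 0) :
    (vfBracket p V W (0, e)).1 = 0 ∧
      (vfBracket p V W (0, e)).2.1 = -(W (0, e)).2.2 • (fderiv ℝ V (0, e) (0, 0, 1)).2.1 := by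
  have hVe : V (0, e) = (0, (V (0, e)).2) := Prod.ext (hV0 e) rfl
  have hWe : W (0, e) = (W (0, e)).2.2 • ((0 : ℝ), (0 : Fin p → ℝ), (1 : ℝ)) := by
    ext <;> simp [hW0]
  have hWV₁ : (fderiv ℝ W (0, e) (V (0, e))).1 = 0 := by
    rw [hVe]
    exact map_fderiv_apply_zero_mk_eq_zero (.fst ℝ ℝ _) (fun e => (hW0 e).1) hW _
  have hWV₂ : (fderiv ℝ W (0, e) (V (0, e))).2.1 = 0 := by
    rw [hVe]
    exact map_fderiv_apply_zero_mk_eq_zero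
      ((ContinuousLinearMap.fst ℝ (Fin p → ℝ) ℝ).comp (.snd ℝ ℝ ((Fin p → ℝ) × ℝ)))
      (fun e => (hW0 e).2) hW _
  have hVW₁ : (fderiv ℝ V (0, e) (W (0, e))).1 = 0 := by
    rw [hWe, map_smul]
    exact smul_eq_zero_of_right _ (map_fderiv_apply_zero_mk_eq_zero (.fst ℝ ℝ _) hV0 hV _)
  refine ⟨by simp [vfBracket, hWV₁, hVW₁], ?_⟩
  rw [vfBracket, Prod.snd_sub, Prod.fst_sub, hWV₂, hWe, map_smul]
  simp

/-- For `V = a·x∂_x + Σ_j b_j ∂_{y_j} + c·∂_z` with smooth coefficients,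
one has `[V, W] ∈ 𝒱_eb` for all `W ∈ 𝒱_eb` if and only if `∂_z b_j(0,y,z) = 0` for all
`j, y, z`, i.e. each `b_j|_{x=0}` is independent of `z`. -/
theorem commutator_b_vector_field_criterion
    (p : ℕ) (a c : EbSpace p → ℝ) (b : EbSpace p → Fin p → ℝ)
    (ha : ContDiff ℝ (⊤ : ℕ∞) a) (hb : ContDiff ℝ (⊤ : ℕ∞) b)
    (hc : ContDiff ℝ (⊤ : ℕ∞) c) :
    (∀ W, IsEbVF p W → IsEbVF p (vfBracket p (fun q => (q.1 * a q, b q, c q)) W))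
    ↔ ∀ (y : Fin p → ℝ) (z : ℝ),
        fderiv ℝ b ((0 : ℝ), y, z) ((0 : ℝ), (0 : Fin p → ℝ), (1 : ℝ)) = 0 := by
  set V : EbSpace p → EbSpace p := fun q => (q.1 * a q, b q, c q)
  have hV : ContDiff ℝ (⊤ : ℕ∞) V := (contDiff_fst.mul ha).prodMk (hb.prodMk hc)
  have hVd : Differentiable ℝ V := hV.differentiable (by simp)
  have hVb (q : EbSpace p) (v : EbSpace p) : (fderiv ℝ V q v).2.1 = fderiv ℝ b q v := by
    have hπ := ((ContinuousLinearMap.fst ℝ (Fin p → ℝ) ℝ).comp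
      (.snd ℝ ℝ ((Fin p → ℝ) × ℝ))).hasFDerivAt.comp q (hVd q).hasFDerivAt
    exact congrArg (· v) hπ.fderiv.symm
  have hbracket {W : EbSpace p → EbSpace p} (hW : IsEbVF p W) (e : (Fin p → ℝ) × ℝ) :
      (vfBracket p V W (0, e)).1 = 0 ∧
        (vfBracket p V W (0, e)).2.1 = -(W (0, e)).2.2 • fderiv ℝ b (0, e) (0, 0, 1) := by
    obtain ⟨hWsmooth, hW0⟩ := isEbVF_iff.1 hW
    rw [← hVb]
    exact vfBracket_apply_zero_mk (hVd _) (hWsmooth.differentiable (by simp) _)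
      (fun _ => zero_mul _) hW0
  constructor
  · intro h y z
    have hdz : IsEbVF p fun _ => ((0 : ℝ), (0 : Fin p → ℝ), (1 : ℝ)) :=
      isEbVF_iff.2 ⟨contDiff_const, fun _ => ⟨rfl, rfl⟩⟩
    have hboundary := ((isEbVF_iff.1 (h _ hdz)).2 (y, z)).2
    simpa [(hbracket hdz (y, z)).2] using hboundary
  · intro hcrit W hW
    have hWsmooth := (isEbVF_iff.1 hW).1
    refine isEbVF_iff.2
      ⟨contDiff_vfBracket (by simpa using hV) (by simpa using hWsmooth), fun e => ?_⟩
    simp [hbracket hW e, hcrit e.1 e.2]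
end

section
/- Let λ ∈ ℂ with Im λ > 0, and let u : (0,∞) → ℂ be a smooth function satisfying the ODE −½(x² u''(x) + x u'(x)) − λ² u(x) + x² u(x) = 0. Assume: (i) u and x u' decay faster than any power of x as x → ∞ (e.g. |u(x)| + |x u'(x)| ≤ C_N x^{−N} for all N and x ≥ 1); and (ii) |u(x)| + |x u'(x)| ≤ C x^{Im λ} for 0 < x ≤ 1. Then u ≡ 0. -/
open Set Filter Topology Complex ComplexConjugate

/-!
Multiplying the equation by `ū` and integrating against `dx/x` is, pointwise, the statement
that the boundary term `Φ x = Re (i λ̄ · ū(x) · x u'(x))` has derivative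
`Im λ · (x |u'|² + 2 (x² + |λ|²) |u|² / x) ≥ 0`; the factor `i λ̄` combines the paper's real- and
imaginary-part arguments into one that works whatever `Re λ` is. The decay hypotheses make `Φ`
vanish at `0` and at `∞`, so the monotone function `Φ` is identically zero, its derivative vanishes,
and hence `u ≡ 0`.
-/

theorem MonotoneOn.eqOn_const_of_tendsto {a c : ℝ} {h : ℝ → ℝ} (hmono : MonotoneOn h (Ioi a))
    (ha : Tendsto h (𝓝[>] a) (𝓝 c)) (htop : Tendsto h atTop (𝓝 c)) :
    EqOn h (fun _ => c) (Ioi a) := by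
  intro x hx
  apply le_antisymm
  · refine ge_of_tendsto htop ?_
    filter_upwards [eventually_ge_atTop x] with y hxy
    exact hmono hx (hx.out.trans_le hxy) hxy
  · refine le_of_tendsto ha ?_
    filter_upwards [self_mem_nhdsWithin, nhdsWithin_le_nhds (eventually_lt_nhds hx.out)]
      with y hy hyx
    exact hmono hy hx hyx.le

theorem eqOn_zero_of_hasDerivAt_nonneg_of_tendsto {a c : ℝ} {h h' : ℝ → ℝ}
    (hd : ∀ x ∈ Ioi a, HasDerivAt h (h' x) x) (hnonneg : ∀ x ∈ Ioi a, 0 ≤ h' x)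
    (ha : Tendsto h (𝓝[>] a) (𝓝 c)) (htop : Tendsto h atTop (𝓝 c)) :
    EqOn h' 0 (Ioi a) := by
  have hmono : MonotoneOn h (Ioi a) :=
    monotoneOn_of_hasDerivWithinAt_nonneg (convex_Ioi a)
      (fun x hx => (hd x hx).continuousAt.continuousWithinAt)
      (fun x hx => (hd x (interior_subset hx)).hasDerivWithinAt)
      (fun x hx => hnonneg x (interior_subset hx))
  intro x hx
  have hconst : h =ᶠ[𝓝 x] fun _ => c :=
    eventuallyEq_of_mem (Ioi_mem_nhds hx) (hmono.eqOn_const_of_tendsto ha htop)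
  exact (hd x hx).unique ((hasDerivAt_const x c).congr_of_eventuallyEq hconst)

theorem tendsto_conj_mul_zero_of_norm_add_le {α : Type*} {L : Filter α} {f g : α → ℂ} {k : α → ℝ}
    (hk : Tendsto k L (𝓝 0)) (hle : ∀ᶠ y in L, ‖f y‖ + ‖g y‖ ≤ k y) :
    Tendsto (fun y => conj (f y) * g y) L (𝓝 0) := by
  have hf : Tendsto f L (𝓝 0) := squeeze_zero_norm'
    (hle.mono fun y hy => (le_add_of_nonneg_right (norm_nonneg _)).trans hy) hk
  have hg : Tendsto g L (𝓝 0) := squeeze_zero_norm'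
    (hle.mono fun y hy => (le_add_of_nonneg_left (norm_nonneg _)).trans hy) hk
  simpa using (continuous_conj.tendsto 0 |>.comp hf).mul hg

theorem hasDerivAt_conj_mul_ofReal_mul {u v : ℝ → ℂ} {u' v' : ℂ} {x : ℝ}
    (hu : HasDerivAt u u' x) (hv : HasDerivAt v v' x) :
    HasDerivAt (fun y : ℝ => conj (u y) * (y * v y))
      (conj u' * (x * v x) + conj (u x) * (v x + x * v')) x := by
  have hxv : HasDerivAt (fun y : ℝ => (y : ℂ) * v y) (1 * v x + x * v') x :=
    (ofRealCLM.hasDerivAt).mul hv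
  simpa only [one_mul, Complex.star_def, Pi.mul_def] using hu.star.mul hxv

theorem re_I_mul_conj_mul_add_eq_of_ode (l w v s : ℂ) {x : ℝ} (hx : x ≠ 0)
    (hode : -(1 / 2 : ℂ) * ((x : ℂ) ^ 2 * s + x * v) - l ^ 2 * w + (x : ℂ) ^ 2 * w = 0) :
    (I * conj l * (conj v * (x * v) + conj w * (v + x * s))).re
      = l.im * (x * ‖v‖ ^ 2 + 2 * (x ^ 2 + ‖l‖ ^ 2) * ‖w‖ ^ 2 / x) := by
  have hx' : (x : ℂ) ≠ 0 := ofReal_ne_zero.mpr hx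
  have hs : v + x * s = 2 * ((x : ℂ) ^ 2 - l ^ 2) * w / x := by
    rw [eq_div_iff hx']
    linear_combination (-2 : ℂ) * hode
  rw [hs]
  simp only [← normSq_eq_norm_sq]
  simp only [add_re, mul_re, mul_im, div_re, div_im, conj_re, conj_im, I_re, I_im, ofReal_re,
    ofReal_im, sub_re, sub_im, pow_two, normSq_apply, re_ofNat, im_ofNat, add_im]
  field_simp
  ring

noncomputable def boundaryTerm (l : ℂ) (u : ℝ → ℂ) (x : ℝ) : ℝ :=
  (I * conj l * (conj (u x) * (x * deriv u x))).re

section BoundaryTerm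

variable {l : ℂ} {u : ℝ → ℂ}

theorem hasDerivAt_boundaryTerm {x : ℝ} (hx : 0 < x) (hu : HasDerivAt u (deriv u x) x)
    (hu' : HasDerivAt (deriv u) (deriv (deriv u) x) x)
    (hode : -(1 / 2 : ℂ) * ((x : ℂ) ^ 2 * deriv (deriv u) x + (x : ℂ) * deriv u x)
        - l ^ 2 * u x + (x : ℂ) ^ 2 * u x = 0) :
    HasDerivAt (boundaryTerm l u)
      (l.im * (x * ‖deriv u x‖ ^ 2 + 2 * (x ^ 2 + ‖l‖ ^ 2) * ‖u x‖ ^ 2 / x)) x := by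
  rw [← re_I_mul_conj_mul_add_eq_of_ode l (u x) (deriv u x) (deriv (deriv u) x) hx.ne' hode]
  exact reCLM.hasFDerivAt.comp_hasDerivAt x
    ((hasDerivAt_conj_mul_ofReal_mul hu hu').const_mul (I * conj l))

theorem tendsto_boundaryTerm {L : Filter ℝ} {k : ℝ → ℝ} (hk : Tendsto k L (𝓝 0))
    (hle : ∀ᶠ x in L, ‖u x‖ + ‖(x : ℂ) * deriv u x‖ ≤ k x) :
    Tendsto (boundaryTerm l u) L (𝓝 0) := by
  have h := (continuous_re.tendsto _).comp
    ((tendsto_conj_mul_zero_of_norm_add_le hk hle).const_mul (I * conj l))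
  rw [mul_zero, zero_re] at h
  exact h

theorem tendsto_boundaryTerm_nhdsGT_zero {b C : ℝ} (hb : 0 < b)
    (hC : ∀ x : ℝ, 0 < x → x ≤ 1 → ‖u x‖ + ‖(x : ℂ) * deriv u x‖ ≤ C * x ^ b) :
    Tendsto (boundaryTerm l u) (𝓝[>] 0) (𝓝 0) := by
  refine tendsto_boundaryTerm (k := fun x => C * x ^ b) ?_ ?_
  · simpa [Real.zero_rpow hb.ne'] using ((Real.continuousAt_rpow_const 0 b
      (Or.inr hb.le)).tendsto.mono_left nhdsWithin_le_nhds).const_mul C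
  · filter_upwards [self_mem_nhdsWithin, nhdsWithin_le_nhds (eventually_le_nhds one_pos)]
      with x hx hx1 using hC x hx hx1

theorem tendsto_boundaryTerm_atTop {C : ℝ}
    (hC : ∀ x : ℝ, 1 ≤ x → ‖u x‖ + ‖(x : ℂ) * deriv u x‖ ≤ C / x) :
    Tendsto (boundaryTerm l u) atTop (𝓝 0) :=
  tendsto_boundaryTerm (tendsto_const_nhds.div_atTop tendsto_id) (eventually_atTop.mpr ⟨1, hC⟩)

end BoundaryTerm

/-- Let `Im λ > 0` and let `u : (0,∞) → ℂ` be smooth with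
`−½(x²u'' + xu') − λ²u + x²u = 0`.  If `u` and `xu'` decay faster than any power of `x`
as `x → ∞`, and `|u| + |xu'| ≤ C x^{Im λ}` for `0 < x ≤ 1`, then `u ≡ 0` on `(0,∞)`. -/
theorem reduced_normal_operator_uniqueness
    (l : ℂ) (hl : 0 < l.im) (u : ℝ → ℂ)
    (hreg : ContDiffOn ℝ (⊤ : ℕ∞) u (Set.Ioi 0))
    (hode : ∀ x ∈ Set.Ioi (0 : ℝ),
      -(1 / 2 : ℂ) * ((x : ℂ) ^ 2 * deriv (deriv u) x + (x : ℂ) * deriv u x)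
        - l ^ 2 * u x + (x : ℂ) ^ 2 * u x = 0)
    (hdecayInf : ∀ N : ℕ, ∃ C : ℝ, ∀ x : ℝ, 1 ≤ x →
      ‖u x‖ + ‖(x : ℂ) * deriv u x‖ ≤ C / x ^ N)
    (hdecayZero : ∃ C : ℝ, ∀ x : ℝ, 0 < x → x ≤ 1 →
      ‖u x‖ + ‖(x : ℂ) * deriv u x‖ ≤ C * x ^ l.im) :
    ∀ x ∈ Set.Ioi (0 : ℝ), u x = 0 := by
  obtain ⟨C₀, hC₀⟩ := hdecayZero
  obtain ⟨C₁, hC₁⟩ := hdecayInf 1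
  have hu : ∀ x ∈ Ioi (0 : ℝ), HasDerivAt u (deriv u x) x := fun x hx =>
    ((hreg.contDiffAt (Ioi_mem_nhds hx)).differentiableAt (by simp)).hasDerivAt
  have hreg' : ContDiffOn ℝ (⊤ : ℕ∞) (deriv u) (Ioi 0) :=
    hreg.deriv_of_isOpen isOpen_Ioi (by exact_mod_cast le_top)
  have hu' : ∀ x ∈ Ioi (0 : ℝ), HasDerivAt (deriv u) (deriv (deriv u) x) x := fun x hx =>
    ((hreg'.contDiffAt (Ioi_mem_nhds hx)).differentiableAt (by simp)).hasDerivAt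
  have hderiv_zero := eqOn_zero_of_hasDerivAt_nonneg_of_tendsto
    (fun x hx => hasDerivAt_boundaryTerm hx (hu x hx) (hu' x hx) (hode x hx))
    (fun x (hx : 0 < x) => by positivity)
    (tendsto_boundaryTerm_nhdsGT_zero hl hC₀)
    (tendsto_boundaryTerm_atTop fun x hx => by simpa using hC₁ x hx)
  intro x (hx : 0 < x)
  have hsum := hderiv_zero hx
  simp only [Pi.zero_apply, mul_eq_zero, hl.ne', false_or] at hsum
  field_simp at hsum
  have hnorm : ‖u x‖ ^ 2 = 0 := by
    nlinarith [mul_nonneg (sq_nonneg x) (sq_nonneg ‖deriv u x‖),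
      mul_nonneg (sq_nonneg ‖l‖) (sq_nonneg ‖u x‖), sq_nonneg ‖u x‖, mul_pos hx hx]
  simpa using hnorm
end

section
/- Let (V, g) be a finite-dimensional real vector space with a nondegenerate symmetric bilinear form of Lorentzian signature (−, +, …, +), dim V ≥ 2. Let X, Y ∈ V be timelike vectors (g(X,X) < 0, g(Y,Y) < 0) lying in the same time cone, i.e. g(X,Y) < 0. Then the quadratic form on the dual space V* defined by Q(ω) = ω(X)·ω(Y) − ½ g(X,Y) g⁻¹(ω,ω) is positive definite, where g⁻¹ is the induced dual form on V*. -/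
set_option maxHeartbeats 1000000

private lemma expand_sum {ι : Type*} (s : Finset ι) (a b u v : ℝ) (f g h k : ι → ℝ) :
    ∑ i ∈ s, (a * f i - b * g i) * (u * h i - v * k i)
      = a*u*(∑ i ∈ s, f i * h i) - a*v*(∑ i ∈ s, f i * k i)
        - b*u*(∑ i ∈ s, g i * h i) + b*v*(∑ i ∈ s, g i * k i) := by
  rw [Finset.mul_sum, Finset.mul_sum, Finset.mul_sum, Finset.mul_sum,
      ← Finset.sum_sub_distrib, ← Finset.sum_sub_distrib, ← Finset.sum_add_distrib]
  exact Finset.sum_congr rfl fun i _ => by ring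

private lemma cs_sum {ι : Type*} (s : Finset ι) (f g : ι → ℝ) :
    (∑ i ∈ s, f i * g i)^2 ≤ (∑ i ∈ s, f i * f i) * (∑ i ∈ s, g i * g i) := by
  have := Finset.sum_mul_sq_le_sq_mul_sq s f g
  simpa [sq] using this

private lemma endgame (x0 y0 w0 P R n p q r : ℝ)
    (hP0 : 0 ≤ P) (hR0 : 0 ≤ R) (hn0 : 0 ≤ n)
    (h1 : p^2 ≤ n*P) (h2 : q^2 ≤ n*R) (h3 : r^2 ≤ P*R)
    (h4 : (R*(R*p - r*q))^2 ≤ (R*(R*n - q^2))*(R*(R*P - r^2)))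
    (hX : -(x0*x0) + P < 0) (hY : -(y0*y0) + R < 0) (hXY : -(x0*y0) + r < 0)
    (hw : w0 ≠ 0 ∨ 0 < n) :
    0 < (-(w0*x0) + p) * (-(w0*y0) + q) - 1/2 * (-(x0*y0) + r) * (-(w0*w0) + n) := by
  have hrr : r^2 < (x0*y0)^2 := by nlinarith
  have hA0 : 0 < x0*y0 + r := by nlinarith
  -- Gram inequality
  have key : P*q^2 + R*p^2 - 2*r*p*q ≤ n*(P*R - r^2) := by
    rcases eq_or_lt_of_le hR0 with hR|hRpos
    · have hq : q = 0 := by nlinarith [sq_nonneg q]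
      have hr : r = 0 := by nlinarith [sq_nonneg r]
      simp [← hR, hq, hr]
    · have d1 : R^2 * ((R*p - r*q)^2) ≤ R^2 * ((R*n - q^2)*(R*P - r^2)) := by nlinarith [h4]
      have d2 : (R*p - r*q)^2 ≤ (R*n - q^2)*(R*P - r^2) :=
        le_of_mul_le_mul_left d1 (by positivity)
      have d3 : R * (P*q^2 + R*p^2 - 2*r*p*q) ≤ R * (n*(P*R - r^2)) := by nlinarith [d2]
      exact le_of_mul_le_mul_left d3 hRpos
  rcases eq_or_lt_of_le hn0 with hn|hnpos
  · have hp : p = 0 := by nlinarith [sq_nonneg p]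
    have hq : q = 0 := by nlinarith [sq_nonneg q]
    have hw0 : w0 ≠ 0 := by
      rcases hw with h|h
      · exact h
      · exact absurd h (by rw [← hn]; exact lt_irrefl 0)
    have hw2 : 0 < w0*w0 := by
      rcases hw0.lt_or_gt with h|h
      · exact mul_pos_of_neg_of_neg h h
      · exact mul_pos h h
    subst hp; subst hq
    nlinarith [mul_pos hw2 hA0, hn]
  · have hA : (x0*x0 - P) * q^2 ≤ (x0*x0 - P) * (n*R) :=
      mul_le_mul_of_nonneg_left h2 (by linarith)
    have hB : (y0*y0 - R) * p^2 ≤ (y0*y0 - R) * (n*P) :=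
      mul_le_mul_of_nonneg_left h1 (by linarith)
    have hC : 0 < n * ((x0*x0 - P) * (y0*y0 - R)) :=
      mul_pos hnpos (mul_pos (by linarith) (by linarith))
    have key2 : x0*x0*q^2 + y0*y0*p^2 - 2*r*p*q < n*(x0*x0*(y0*y0) - r^2) := by
      nlinarith [key, hA, hB, hC]
    nlinarith [key2, hA0, sq_nonneg ((x0*y0 + r)*w0 - (x0*q + y0*p))]

/-- Let `(V, g)` be a finite-dimensional real vector space with a
nondegenerate symmetric bilinear form of Lorentzian signature `(−,+,…,+)` (encoded by a
linear isomorphism `e : V ≃ (Fin d → ℝ)`, `d ≥ 2`, taking `g` to the standard Minkowski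
form).  Let `X, Y` be timelike and in the same time cone (`g(X,X) < 0`, `g(Y,Y) < 0`,
`g(X,Y) < 0`).  Then the stress-energy quadratic form
`Q(ω) = ω(X)ω(Y) − ½ g(X,Y) g⁻¹(ω,ω)` is positive definite on `V*`.  Since `g` is
nondegenerate, every covector is `ω = g(W,·)` for a unique `W ∈ V`, and
`Q(g(W,·)) = g(W,X)g(W,Y) − ½g(X,Y)g(W,W)`; positive definiteness reads: this quantity
is `> 0` for every `W ≠ 0`. -/
theorem stress_energy_positive_definite
    (d : ℕ) (hd : 2 ≤ d) (V : Type*) [AddCommGroup V] [Module ℝ V]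
    (g : V →ₗ[ℝ] V →ₗ[ℝ] ℝ) (e : V ≃ₗ[ℝ] (Fin d → ℝ))
    (hg : ∀ u v, g u v = ∑ i : Fin d, (if (i : ℕ) = 0 then (-1 : ℝ) else 1) * e u i * e v i)
    (X Y : V) (hX : g X X < 0) (hY : g Y Y < 0) (hXY : g X Y < 0) :
    ∀ W : V, W ≠ 0 → 0 < g W X * g W Y - (1 / 2) * g X Y * g W W := by
  haveI : NeZero d := ⟨by omega⟩
  intro W hW
  set s : Finset (Fin d) := Finset.univ.erase 0 with hs
  have hsum : ∀ u v : V, g u v = -(e u 0 * e v 0) + ∑ i ∈ s, e u i * e v i := by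
    intro u v
    rw [hg, ← Finset.add_sum_erase _ _ (Finset.mem_univ (0 : Fin d))]
    congr 1
    · simp
    · refine Finset.sum_congr rfl fun i hi => ?_
      have h0 : (i : ℕ) ≠ 0 := fun hval =>
        (Finset.mem_erase.mp hi).1 (Fin.ext (by simp [hval]))
      simp [h0]
  rw [hsum X X] at hX
  rw [hsum Y Y] at hY
  rw [hsum X Y] at hXY
  rw [hsum W X, hsum W Y, hsum X Y, hsum W W]
  -- abbreviations
  set x : Fin d → ℝ := e X
  set y : Fin d → ℝ := e Y
  set w : Fin d → ℝ := e W
  set P : ℝ := ∑ i ∈ s, x i * x i with hPdef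
  set R : ℝ := ∑ i ∈ s, y i * y i with hRdef
  set n : ℝ := ∑ i ∈ s, w i * w i with hndef
  set p : ℝ := ∑ i ∈ s, w i * x i with hpdef
  set q : ℝ := ∑ i ∈ s, w i * y i with hqdef
  set r : ℝ := ∑ i ∈ s, x i * y i with hrdef
  have hyx : ∑ i ∈ s, y i * x i = r := by
    rw [hrdef]; exact Finset.sum_congr rfl fun i _ => mul_comm _ _
  have hyw : ∑ i ∈ s, y i * w i = q := by
    rw [hqdef]; exact Finset.sum_congr rfl fun i _ => mul_comm _ _
  have hP0 : 0 ≤ P := Finset.sum_nonneg fun i _ => mul_self_nonneg _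
  have hR0 : 0 ≤ R := Finset.sum_nonneg fun i _ => mul_self_nonneg _
  have hn0 : 0 ≤ n := Finset.sum_nonneg fun i _ => mul_self_nonneg _
  have h1 : p^2 ≤ n*P := cs_sum s w x
  have h2 : q^2 ≤ n*R := cs_sum s w y
  have h3 : r^2 ≤ P*R := cs_sum s x y
  have h4 : (R*(R*p - r*q))^2 ≤ (R*(R*n - q^2))*(R*(R*P - r^2)) := by
    have h := cs_sum s (fun i => R * w i - q * y i) (fun i => R * x i - r * y i)
    rw [expand_sum s R q R r w y x y, expand_sum s R q R q w y w y,
        expand_sum s R r R r x y x y, hyx, hyw,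
        ← hpdef, ← hqdef, ← hndef, ← hRdef, ← hPdef, ← hrdef] at h
    nlinarith [h]
  -- membership in V nonzero gives coordinate nonvanishing
  have hw : w 0 ≠ 0 ∨ 0 < n := by
    by_contra hcon
    push_neg at hcon
    obtain ⟨h0, hn⟩ := hcon
    have hn' : n = 0 := le_antisymm (by linarith) hn0
    have hall : ∀ i ∈ s, w i * w i = 0 :=
      (Finset.sum_eq_zero_iff_of_nonneg fun i _ => mul_self_nonneg _).mp hn'
    have : w = 0 := by
      funext i
      by_cases hi : i = 0
      · rw [hi]; exact h0
      · exact mul_self_eq_zero.mp (hall i (Finset.mem_erase.mpr ⟨hi, Finset.mem_univ _⟩))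
    exact hW (by simpa using e.map_eq_zero_iff.mp (by simpa [w] using this))
  exact endgame (x 0) (y 0) (w 0) P R n p q r hP0 hR0 hn0 h1 h2 h3 h4 hX hY hXY hw
end
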